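/- arXiv:1011.5971 — 2 statements merged into one kernel-verified Lean document; each statement's English description precedes it below -/
import Mathlib

section
/- With u_1 = ε, u_{n+1} = (u_n x_n)^(+), and h_n = ψ_{x_1}⋯ψ_{x_n}(x_{n+1}), one has u_{n+1} = h_{n-1} h_{n-2} ⋯ h_1 h_0 = \bar{h_0} \bar{h_1} ⋯ \bar{h_{n-1}} for all n ≥ 1, where \bar{w} denotes the reversal of w. -/
variable {A : Type*} [DecidableEq A]

/-- `psiW a` is the morphism with `ψ_a(a) = a` and `ψ_a(x) = ax` for `x ≠ a`. -/
def psiW (a : A) (w : List A) : List A :=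
  w.flatMap (fun b => if b = a then [a] else [a, b])

/-- `muW x n = ψ_{x 1} ∘ ⋯ ∘ ψ_{x n}`. -/
def muW (x : ℕ → A) : ℕ → List A → List A
  | 0 => id
  | n + 1 => fun w => muW x n (psiW (x (n + 1)) w)

/-- `hW x n = μ_n (x_{n+1})`. -/
def hW (x : ℕ → A) (n : ℕ) : List A := muW x n [x (n + 1)]

/-- `p` is the palindromic right-closure of `w`: the shortest palindrome having `w`
as a prefix. -/
def IsPalClosure (w p : List A) : Prop :=
  w <+: p ∧ p.reverse = p ∧
    ∀ q : List A, w <+: q → q.reverse = q → p.length ≤ q.length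

/-- The finite word `w` is a prefix of the infinite word `s`. -/
def PrefInf (w : List A) (s : ℕ → A) : Prop :=
  ∀ i : ℕ, ∀ h : i < w.length, w[i] = s i

/-- Number of occurrences (positions) of `w` as a factor of `v`. -/
def occ (w v : List A) : ℕ :=
  (List.range (v.length + 1)).countP
    (fun i => decide (i + w.length ≤ v.length ∧ (v.drop i).take w.length = w))

/-- `cat z k = z 1 ++ z 2 ++ ⋯ ++ z k`. -/
def cat (z : ℕ → List A) (k : ℕ) : List A := ((List.range' 1 k).map z).flatten

/-- `z` is the Ziv-Lempel factorization of the infinite word `s`: each `z m` is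
the shortest prefix of `z m · z (m+1) ⋯` occurring only once in `z 1 ⋯ z m`. -/
def IsZFact (s : ℕ → A) (z : ℕ → List A) : Prop :=
  ∀ m : ℕ, 1 ≤ m → z m ≠ [] ∧ PrefInf (cat z m) s ∧
    occ (z m) (cat z m) = 1 ∧
    ∀ p : List A, p <+: z m → p ≠ z m → 2 ≤ occ p (cat z m)

/-- `c` is the Crochemore factorization of the infinite word `s`: each `c m` is
either a fresh letter, or the longest prefix of `c m · c (m+1) ⋯` occurring
twice in `c 1 ⋯ c m`. -/
def IsCFact (s : ℕ → A) (c : ℕ → List A) : Prop :=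
  ∀ m : ℕ, 1 ≤ m → c m ≠ [] ∧ PrefInf (cat c m) s ∧
    ((∃ a : A, c m = [a] ∧ a ∉ cat c (m - 1)) ∨
      (2 ≤ occ (c m) (cat c m) ∧
        occ (c m ++ [s (cat c m).length]) (cat c m ++ [s (cat c m).length]) = 1))


/-!
The heart of the proof is Justin's formula for a single step: if `P = (p a)^(+)`, then
`ψ_b(P) b = (ψ_b(p) b a)^(+)`. Writing `h'_i` for the words `h_i` of the shifted directive word
`x_2 x_3 ⋯`, one has `h_n ⋯ h_0 = ψ_{x_1}(h'_{n-1} ⋯ h'_0) x_1`, so by induction on `n` (for all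
directive words at once) the products `h_{n-1} ⋯ h_0` obey the same recursion as `u_{n+1}`;
palindromic closures being unique, they coincide. The second expression is the reversal of the
first, which is a palindrome.

For the one-step formula: a palindrome `q` with prefix `w` and `|q| ≤ 2|w|` has the form `v s ṽ`
with `w = v s` and `s` a palindrome, so `|w^(+)| = 2|w| - |s|` for the longest palindromic suffix
`s` of `w`. The nonempty palindromic suffixes of `ψ_b(w) b` are of the form `ψ_b(t) b`, and those of
`ψ_b(w)` not ending with `b` of the form `s` with `b s = ψ_b(t)`, for palindromic suffixes `t` of
`w`; since `ψ_b` preserves the suffix order, this transports the length bound from `w` to the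
image.
-/

section PalClosure

variable {α : Type*} {w p q : List α}

theorem exists_eq_append_reverse_of_palindrome (hw : w <+: q) (hq : q.reverse = q)
    (hlen : q.length ≤ 2 * w.length) :
    ∃ v s, w = v ++ s ∧ s.reverse = s ∧ q = w ++ v.reverse := by
  obtain ⟨r, rfl⟩ := hw
  have hr : r.length ≤ w.length := by simp only [List.length_append] at hlen; omega
  set v := w.take r.length
  set s := w.drop r.length
  have hvs : w = v ++ s := (List.take_append_drop _ _).symm
  rw [hvs, List.reverse_append, List.reverse_append, List.append_assoc] at hq
  obtain ⟨hrv, hq⟩ := List.append_inj hq (by simp [v, hr])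
  obtain ⟨hs, hvr⟩ := List.append_inj hq (by simp)
  exact ⟨v, s, hvs, hs, by rw [← hvr]⟩

theorem isPalClosure_iff : IsPalClosure w p ↔ w <+: p ∧ p.reverse = p ∧
    ∀ t, t <:+ w → t.reverse = t → p.length + t.length ≤ 2 * w.length := by
  refine and_congr_right fun _ => and_congr_right fun _ => ⟨?_, ?_⟩
  · rintro hmin t ⟨v, rfl⟩ ht
    have := hmin (v ++ t ++ v.reverse) ⟨_, rfl⟩ (by simp [ht])
    simp only [List.length_append, List.length_reverse] at this ⊢
    omega
  · intro hbound q hwq hq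
    by_cases hlen : q.length ≤ 2 * w.length
    · obtain ⟨v, s, rfl, hs, rfl⟩ := exists_eq_append_reverse_of_palindrome hwq hq hlen
      have := hbound s ⟨v, rfl⟩ hs
      simp only [List.length_append, List.length_reverse] at this ⊢
      omega
    · have := hbound [] List.nil_suffix rfl
      simp only [List.length_nil] at this
      omega

theorem IsPalClosure.length_le (hp : IsPalClosure w p) : p.length ≤ 2 * w.length := by
  simpa using (isPalClosure_iff.1 hp).2.2 [] List.nil_suffix rfl

theorem IsPalClosure.exists_eq_append_reverse (hp : IsPalClosure w p) :
    ∃ v s, w = v ++ s ∧ s.reverse = s ∧ p = w ++ v.reverse :=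
  exists_eq_append_reverse_of_palindrome hp.1 hp.2.1 hp.length_le

theorem IsPalClosure.unique (hp : IsPalClosure w p) (hq : IsPalClosure w q) : p = q := by
  have hlen : p.length = q.length :=
    le_antisymm (hp.2.2 q hq.1 hq.2.1) (hq.2.2 p hp.1 hp.2.1)
  obtain ⟨v, s, hw, -, rfl⟩ := hp.exists_eq_append_reverse
  obtain ⟨v', s', hw', -, rfl⟩ := hq.exists_eq_append_reverse
  have hv : v = v' := (List.append_inj (hw.symm.trans hw') (by simpa using hlen)).1
  subst hv
  rfl

end PalClosure

section Psi

variable {b : A}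

@[simp]
theorem psiW_nil : psiW b [] = [] := rfl

theorem psiW_cons (c : A) (m : List A) :
    psiW b (c :: m) = b :: if c = b then psiW b m else c :: psiW b m := by
  by_cases h : c = b <;> simp [psiW, h]

theorem psiW_singleton (c : A) : psiW b [c] = if c = b then [b] else [b, c] := by
  by_cases h : c = b <;> simp [psiW_cons, h]

@[simp]
theorem psiW_append (t t' : List A) : psiW b (t ++ t') = psiW b t ++ psiW b t' :=
  List.flatMap_append

theorem eq_of_psiW_eq_cons {c : A} {m l : List A} (h : psiW b m = c :: l) : c = b := by
  cases m with
  | nil => simp at h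
  | cons d m => rw [psiW_cons] at h; exact (List.cons.inj h).1.symm

theorem psiW_injective (b : A) : Function.Injective (psiW b) := by
  intro t t' h
  induction t generalizing t' with
  | nil => cases t' <;> simp_all [psiW_cons]
  | cons c m ih =>
    cases t' with
    | nil => simp [psiW_cons] at h
    | cons c' m' =>
      simp only [psiW_cons, List.cons.injEq, true_and] at h
      split_ifs at h with hc hc'
      · rw [hc, hc', ih h]
      · exact absurd (eq_of_psiW_eq_cons h) hc'
      · exact absurd (eq_of_psiW_eq_cons h.symm) hc
      · rw [(List.cons.inj h).1, ih (List.cons.inj h).2]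

theorem reverse_psiW_append_singleton (t : List A) :
    (psiW b t ++ [b]).reverse = psiW b t.reverse ++ [b] := by
  induction t with
  | nil => rfl
  | cons c m ih =>
    have hc : [b] ++ (psiW b [c]).reverse = psiW b [c] ++ [b] := by
      by_cases h : c = b <;> simp [psiW_cons, h]
    calc (psiW b (c :: m) ++ [b]).reverse
        = (psiW b [c] ++ (psiW b m ++ [b])).reverse := by
          rw [← List.append_assoc, ← psiW_append]; rfl
      _ = psiW b m.reverse ++ ([b] ++ (psiW b [c]).reverse) := by
          rw [List.reverse_append, ih, List.append_assoc]
      _ = psiW b (c :: m).reverse ++ [b] := by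
          rw [hc, List.reverse_cons, psiW_append, List.append_assoc]

theorem length_psiW_reverse (t : List A) : (psiW b t.reverse).length = (psiW b t).length := by
  simpa using congrArg List.length (reverse_psiW_append_singleton (b := b) t).symm

theorem psiW_append_singleton_palindrome_iff {t : List A} :
    (psiW b t ++ [b]).reverse = psiW b t ++ [b] ↔ t.reverse = t := by
  rw [reverse_psiW_append_singleton, List.append_left_inj, (psiW_injective b).eq_iff]

theorem suffix_psiW_of_suffix {t t' : List A} (h : t <:+ t') : psiW b t <:+ psiW b t' := by
  obtain ⟨r, rfl⟩ := h
  exact ⟨psiW b r, (psiW_append r t).symm⟩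

theorem prefix_psiW_append_singleton_of_prefix {t t' : List A} (h : t <+: t') :
    psiW b t ++ [b] <+: psiW b t' ++ [b] := by
  obtain ⟨r, rfl⟩ := h
  rw [psiW_append, List.append_assoc, List.prefix_append_right_inj]
  cases r with
  | nil => exact List.prefix_refl _
  | cons c r => simp [psiW_cons]

theorem exists_of_suffix_psiW {p s : List A} (h : s <:+ psiW b p) :
    ∃ t, t <:+ p ∧ (s = psiW b t ∨ ∃ c, c ≠ b ∧ c :: t <:+ p ∧ s = c :: psiW b t) := by
  induction p with
  | nil => exact ⟨[], List.suffix_refl _, .inl (List.suffix_nil.1 h)⟩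
  | cons c m ih =>
    have lift : s <:+ psiW b m → ∃ t, t <:+ c :: m ∧
        (s = psiW b t ∨ ∃ c', c' ≠ b ∧ c' :: t <:+ c :: m ∧ s = c' :: psiW b t) := by
      intro h
      obtain ⟨t, ht, hs⟩ := ih h
      refine ⟨t, ht.trans (List.suffix_cons c m), hs.imp_right ?_⟩
      exact fun ⟨c', hc', hsuf, hs⟩ => ⟨c', hc', hsuf.trans (List.suffix_cons c m), hs⟩
    rw [psiW_cons] at h
    split_ifs at h with hc <;> simp only [List.suffix_cons_iff] at h
    · rcases h with h | h
      · exact ⟨c :: m, List.suffix_refl _, .inl (by rw [h, psiW_cons, if_pos hc])⟩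
      · exact lift h
    · rcases h with h | h | h
      · exact ⟨c :: m, List.suffix_refl _, .inl (by rw [h, psiW_cons, if_neg hc])⟩
      · exact ⟨m, List.suffix_cons c m, .inr ⟨c, hc, List.suffix_refl _, h⟩⟩
      · exact lift h

theorem exists_of_palindrome_suffix_psiW_append_singleton {p s : List A}
    (h : s <:+ psiW b p ++ [b]) (hne : s ≠ []) (hs : s.reverse = s) :
    ∃ t, t <:+ p ∧ t.reverse = t ∧ s = psiW b t ++ [b] := by
  obtain ⟨s, rfl, hs'⟩ := (List.suffix_concat_iff.1 h).resolve_left hne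
  obtain ⟨t, ht, rfl | ⟨c, hc, -, rfl⟩⟩ := exists_of_suffix_psiW hs'
  · exact ⟨t, ht, psiW_append_singleton_palindrome_iff.1 hs, rfl⟩
  · exact absurd (by simpa using (congrArg List.head? hs).symm) hc

theorem exists_of_palindrome_suffix_psiW {p s : List A} (h : s <:+ psiW b p)
    (hne : s ≠ []) (hs : s.reverse = s) (hlast : s.getLast? ≠ some b) :
    ∃ t, t <:+ p ∧ t.reverse = t ∧ b :: s = psiW b t := by
  have hhead : s.head? ≠ some b := by rwa [← List.getLast?_reverse, hs]
  obtain ⟨t, ht, rfl | ⟨c, hc, hct, rfl⟩⟩ := exists_of_suffix_psiW h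
  · cases t with
    | nil => exact absurd rfl hne
    | cons c t => simp [psiW_cons] at hhead
  · refine ⟨c :: t, hct, ?_, by rw [psiW_cons, if_neg hc]⟩
    rw [← psiW_append_singleton_palindrome_iff (b := b), psiW_cons, if_neg hc]
    simpa using congrArg (· ++ [b]) hs

end Psi

theorem IsPalClosure.length_psiW_add_le (b : A) {w P t : List A} (hP : IsPalClosure w P)
    (ht : t <:+ w) (htpal : t.reverse = t) :
    (psiW b P).length + (psiW b t).length ≤ 2 * (psiW b w).length := by
  have hbound := (isPalClosure_iff.1 hP).2.2 t ht htpal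
  obtain ⟨v, s, rfl, -, rfl⟩ := hP.exists_eq_append_reverse
  simp only [List.length_append, List.length_reverse] at hbound
  have hts : t <:+ s := List.suffix_of_suffix_length_le ht ⟨v, rfl⟩ (by omega)
  have hψts := (suffix_psiW_of_suffix (b := b) hts).length_le
  simp only [psiW_append, List.length_append, length_psiW_reverse]
  omega

theorem isPalClosure_psiW_append_singleton (b a : A) {p P : List A}
    (hP : IsPalClosure (p ++ [a]) P) :
    IsPalClosure (psiW b p ++ [b] ++ [a]) (psiW b P ++ [b]) := by
  have hbound {t : List A} (ht : t <:+ p ++ [a]) (htpal : t.reverse = t) :=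
    hP.length_psiW_add_le b ht htpal
  refine isPalClosure_iff.2 ⟨?_, psiW_append_singleton_palindrome_iff.2 hP.2.1, ?_⟩
  · refine List.IsPrefix.trans ?_ (prefix_psiW_append_singleton_of_prefix hP.1)
    by_cases h : a = b <;> simp [psiW_cons, h]
  intro s hs hspal
  rcases eq_or_ne s [] with rfl | hne
  · have hP_le := hbound (List.suffix_append p [a]) rfl
    have ha_le : (psiW b [a]).length ≤ 2 := by rw [psiW_singleton]; split <;> simp
    simp only [psiW_append, List.length_append, List.length_singleton, List.length_nil]
      at hP_le ⊢
    omega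
  by_cases hab : a = b
  · subst hab
    obtain ⟨t, ht, htpal, rfl⟩ := exists_of_palindrome_suffix_psiW_append_singleton
      (b := a) (p := p ++ [a]) (by simpa [psiW_singleton] using hs) hne hspal
    have hPt := hbound ht htpal
    simp only [psiW_append, psiW_singleton, if_pos, List.length_append,
      List.length_singleton] at hPt ⊢
    omega
  · have hlast : s.getLast? ≠ some b := by
      obtain ⟨s', rfl, -⟩ := (List.suffix_concat_iff.1 hs).resolve_left hne
      simpa using hab
    obtain ⟨t, ht, htpal, hbt⟩ := exists_of_palindrome_suffix_psiW
      (p := p ++ [a]) (by simpa [psiW_singleton, hab] using hs) hne hspal hlast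
    have hPt := hbound ht htpal
    rw [← hbt] at hPt
    simp only [psiW_append, psiW_singleton, hab, if_false, List.length_append,
      List.length_cons] at hPt ⊢
    omega

def hProd (x : ℕ → A) (n : ℕ) : List A := ((List.range n).reverse.map (hW x)).flatten

theorem muW_succ_eq_psiW (x : ℕ → A) (n : ℕ) (w : List A) :
    muW x (n + 1) w = psiW (x 1) (muW (fun k => x (k + 1)) n w) := by
  induction n generalizing w with
  | zero => rfl
  | succ n ih => exact ih _

theorem hW_succ (x : ℕ → A) (n : ℕ) :
    hW x (n + 1) = psiW (x 1) (hW (fun k => x (k + 1)) n) :=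
  muW_succ_eq_psiW x n _

theorem hProd_succ (x : ℕ → A) (n : ℕ) : hProd x (n + 1) = hW x n ++ hProd x n := by
  simp [hProd, List.range_succ]

theorem hProd_succ_eq_psiW (x : ℕ → A) (n : ℕ) :
    hProd x (n + 1) = psiW (x 1) (hProd (fun k => x (k + 1)) n) ++ [x 1] := by
  induction n with
  | zero => rfl
  | succ n ih => rw [hProd_succ, hW_succ, ih, hProd_succ, psiW_append, List.append_assoc]

theorem isPalClosure_hProd (x : ℕ → A) (n : ℕ) :
    IsPalClosure (hProd x n ++ [x (n + 1)]) (hProd x (n + 1)) := by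
  induction n generalizing x with
  | zero => exact ⟨List.prefix_refl _, rfl, fun _ hq _ => hq.length_le⟩
  | succ n ih =>
    rw [hProd_succ_eq_psiW, hProd_succ_eq_psiW]
    exact isPalClosure_psiW_append_singleton (x 1) (x (n + 2)) (ih _)

theorem u_eq_prod_h (x : ℕ → A) (u : ℕ → List A) (hu1 : u 1 = [])
    (hu : ∀ n : ℕ, 1 ≤ n → IsPalClosure (u n ++ [x n]) (u (n + 1))) :
    ∀ n : ℕ, 1 ≤ n →
      u (n + 1) = ((List.range n).reverse.map (hW x)).flatten ∧
      u (n + 1) = ((List.range n).map (fun i => (hW x i).reverse)).flatten := by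
  have hu_eq : ∀ n, u (n + 1) = hProd x n := by
    intro n
    induction n with
    | zero => exact hu1
    | succ n ih => exact (hu (n + 1) n.succ_pos).unique (ih ▸ isPalClosure_hProd x n)
  intro n hn
  refine ⟨hu_eq n, ?_⟩
  rw [← (hu n hn).2.1, hu_eq n]
  simp [hProd, List.reverse_flatten, List.map_reverse, Function.comp_def]
end

section
/- If P(n) is defined (i.e., the letter x_n occurs at some earlier position in the directive word, with P(n) the largest such position), then h_{n-1} = h_{n-2} h_{n-3} ⋯ h_{P(n)-1}. -/
variable {A : Type*} [DecidableEq A]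

/-!
Each `μ_k = ψ_{x_1} ∘ ⋯ ∘ ψ_{x_k}` is a monoid morphism, and for a letter `b` one has
`μ_{k+1}(b) = μ_k(x_{k+1} b) = h_k μ_k(b)` when `x_{k+1} ≠ b`, while `μ_{k+1}(x_{k+1}) = h_k`.
Unfolding `h_{n-1} = μ_{n-1}(x_n)` down to `k = P(n)` therefore peels off `h_{n-2}, …, h_{P(n)}`
and leaves `μ_{P(n)}(x_{P(n)}) = h_{P(n)-1}`.
-/

lemma psiW_append_s7 (a : A) (u v : List A) : psiW a (u ++ v) = psiW a u ++ psiW a v := by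
  simp [psiW]

lemma muW_append (x : ℕ → A) (k : ℕ) (u v : List A) :
    muW x k (u ++ v) = muW x k u ++ muW x k v := by
  induction k generalizing u v with
  | zero => rfl
  | succ k ih => simp [muW, psiW_append_s7, ih]

lemma muW_succ_self (x : ℕ → A) (k : ℕ) : muW x (k + 1) [x (k + 1)] = hW x k := by
  simp [muW, psiW, hW]

lemma muW_succ_singleton_of_ne (x : ℕ → A) (k : ℕ) {b : A} (hb : x (k + 1) ≠ b) :
    muW x (k + 1) [b] = hW x k ++ muW x k [b] := by
  have hpsi : psiW (x (k + 1)) [b] = [x (k + 1)] ++ [b] := by simp [psiW, Ne.symm hb]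
  change muW x k (psiW (x (k + 1)) [b]) = _
  rw [hpsi, muW_append, hW]

lemma muW_add_singleton (x : ℕ → A) (m k : ℕ) {b : A}
    (hb : ∀ i, m < i → i ≤ m + k → x i ≠ b) :
    muW x (m + k) [b] = ((List.range' m k).reverse.map (hW x)).flatten ++ muW x m [b] := by
  induction k with
  | zero => simp
  | succ k ih =>
    rw [← Nat.add_assoc, muW_succ_singleton_of_ne x _ (hb _ (by omega) (by omega)),
      ih fun i hi hik => hb i hi (by omega), List.range'_concat]
    simp

theorem h_eq_prod_of_P_defined (x : ℕ → A) (n p : ℕ) (hp1 : 1 ≤ p)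
    (hpn : p < n) (hpx : x p = x n)
    (hmax : ∀ i : ℕ, p < i → i < n → x i ≠ x n) :
    hW x (n - 1) = ((List.range' (p - 1) (n - p)).reverse.map (hW x)).flatten := by
  obtain ⟨q, rfl⟩ : ∃ q, p = q + 1 := ⟨p - 1, by omega⟩
  obtain ⟨k, rfl⟩ : ∃ k, n = q + 1 + k + 1 := ⟨n - q - 2, by omega⟩
  have hunfold : hW x (q + 1 + k) = ((List.range' (q + 1) k).reverse.map (hW x)).flatten
      ++ hW x q := by
    rw [hW, muW_add_singleton x _ _ fun i hi hik => hmax i hi (by omega), ← hpx, muW_succ_self]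
  rw [show q + 1 + k + 1 - 1 = q + 1 + k by omega, show q + 1 - 1 = q by omega,
    show q + 1 + k + 1 - (q + 1) = k + 1 by omega, List.range'_succ, hunfold]
  simp
end
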